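/- arXiv:quant-ph/0403082 — 6 statements merged into one kernel-verified Lean document; each statement's English description precedes it below -/
import Mathlib

section
/- The tilde map Ψ(U) = Jₙ' Uᵀ (Jₙ')⁻¹ is an antihomomorphism in the sense Ψ(G₁G₂) = Ψ(G₂)Ψ(G₁), and for any local unitaries V, W (tensor products of SU(2) matrices) and arbitrary U ∈ SU(2ⁿ), one has V·U·W·Ψ(V·U·W) = V·U·Ψ(U)·V⁻¹. Consequently the spectrum of U·Ψ(U) is invariant under left and right multiplication of U by local unitaries. -/
/-!
For a 2×2 matrix, `iσ_y · Gᵀ = adj(G) · iσ_y`, and taking tensor products commutes with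
products and transposes; hence `Ψ(G₁ ⊗ ⋯ ⊗ Gₙ) = adj(G₁) ⊗ ⋯ ⊗ adj(Gₙ)`, which is the inverse
of `G₁ ⊗ ⋯ ⊗ Gₙ` when every `det Gⱼ = 1`. Since `Ψ` reverses products,
`Ψ(VUW) = W⁻¹ Ψ(U) V⁻¹`, so `VUW Ψ(VUW) = V (UΨ(U)) V⁻¹` is a conjugate of `UΨ(U)`.
-/

open Matrix Kronecker Complex

noncomputable def tpow (n : ℕ) (G : Fin n → Matrix (Fin 2) (Fin 2) ℂ) :
    Matrix (Fin n → Fin 2) (Fin n → Fin 2) ℂ :=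
  Matrix.of fun x y => ∏ j, G j (x j) (y j)

noncomputable def Jn (n : ℕ) : Matrix (Fin n → Fin 2) (Fin n → Fin 2) ℂ :=
  tpow n fun _ => !![0, 1; -1, 0]

noncomputable def tilde (n : ℕ) (U : Matrix (Fin n → Fin 2) (Fin n → Fin 2) ℂ) :
    Matrix (Fin n → Fin 2) (Fin n → Fin 2) ℂ :=
  Jn n * Uᵀ * (Jn n)⁻¹

section TensorPower

variable {n : ℕ}

theorem tpow_mul (A B : Fin n → Matrix (Fin 2) (Fin 2) ℂ) :
    tpow n A * tpow n B = tpow n (fun j => A j * B j) := by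
  ext x y
  simp only [tpow, Matrix.mul_apply, Matrix.of_apply]
  rw [Finset.prod_univ_sum, Fintype.piFinset_univ]
  exact Finset.sum_congr rfl fun z _ => Finset.prod_mul_distrib.symm

theorem tpow_one : tpow n (fun _ => 1) = 1 := by
  ext x y
  simp only [tpow, Matrix.of_apply, Matrix.one_apply, Fintype.prod_boole, funext_iff]
  congr

theorem transpose_tpow (A : Fin n → Matrix (Fin 2) (Fin 2) ℂ) :
    (tpow n A)ᵀ = tpow n (fun j => (A j)ᵀ) := by
  ext x y
  simp only [tpow, Matrix.transpose_apply, Matrix.of_apply]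

theorem tpow_mul_tpow_adjugate {A : Fin n → Matrix (Fin 2) (Fin 2) ℂ}
    (hA : ∀ j, (A j).det = 1) :
    tpow n A * tpow n (fun j => (A j).adjugate) = 1 := by
  simp only [tpow_mul, Matrix.mul_adjugate, hA, one_smul, tpow_one]

theorem isUnit_det_tpow {A : Fin n → Matrix (Fin 2) (Fin 2) ℂ} (hA : ∀ j, (A j).det = 1) :
    IsUnit (tpow n A).det :=
  Matrix.isUnit_det_of_right_inverse (tpow_mul_tpow_adjugate hA)

theorem inv_tpow {A : Fin n → Matrix (Fin 2) (Fin 2) ℂ} (hA : ∀ j, (A j).det = 1) :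
    (tpow n A)⁻¹ = tpow n (fun j => (A j).adjugate) :=
  Matrix.inv_eq_right_inv (tpow_mul_tpow_adjugate hA)

end TensorPower

section Tilde

variable {n : ℕ}

theorem iSigmaY_mul_transpose (G : Matrix (Fin 2) (Fin 2) ℂ) :
    !![0, 1; -1, 0] * Gᵀ = G.adjugate * !![0, 1; -1, 0] := by
  ext i j
  fin_cases i <;> fin_cases j <;> simp [Matrix.mul_apply, Fin.sum_univ_two, Matrix.adjugate_fin_two]

theorem isUnit_det_Jn : IsUnit (Jn n).det :=
  isUnit_det_tpow fun _ => by simp [Matrix.det_fin_two_of]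

theorem tilde_mul (G₁ G₂ : Matrix (Fin n → Fin 2) (Fin n → Fin 2) ℂ) :
    tilde n (G₁ * G₂) = tilde n G₂ * tilde n G₁ := by
  have hJ : (Jn n)⁻¹ * Jn n = 1 := Matrix.nonsing_inv_mul _ isUnit_det_Jn
  calc Jn n * (G₁ * G₂)ᵀ * (Jn n)⁻¹
      = Jn n * G₂ᵀ * ((Jn n)⁻¹ * Jn n) * G₁ᵀ * (Jn n)⁻¹ := by
        rw [hJ, Matrix.transpose_mul]; noncomm_ring
    _ = Jn n * G₂ᵀ * (Jn n)⁻¹ * (Jn n * G₁ᵀ * (Jn n)⁻¹) := by noncomm_ring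

theorem tilde_tpow (A : Fin n → Matrix (Fin 2) (Fin 2) ℂ) :
    tilde n (tpow n A) = tpow n (fun j => (A j).adjugate) := by
  have hJ : Jn n * (tpow n A)ᵀ = tpow n (fun j => (A j).adjugate) * Jn n := by
    simp only [Jn, transpose_tpow, tpow_mul, iSigmaY_mul_transpose]
  rw [tilde, hJ, Matrix.mul_nonsing_inv_cancel_right _ _ isUnit_det_Jn]

theorem tilde_tpow_of_det_eq_one {A : Fin n → Matrix (Fin 2) (Fin 2) ℂ}
    (hA : ∀ j, (A j).det = 1) :
    tilde n (tpow n A) = (tpow n A)⁻¹ := by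
  rw [tilde_tpow, inv_tpow hA]

theorem tpow_mul_mul_tpow_mul_tilde {A B : Fin n → Matrix (Fin 2) (Fin 2) ℂ}
    (hA : ∀ j, (A j).det = 1) (hB : ∀ j, (B j).det = 1)
    (U : Matrix (Fin n → Fin 2) (Fin n → Fin 2) ℂ) :
    tpow n A * U * tpow n B * tilde n (tpow n A * U * tpow n B) =
      tpow n A * U * tilde n U * (tpow n A)⁻¹ := by
  rw [tilde_mul, tilde_mul, tilde_tpow_of_det_eq_one hA, tilde_tpow_of_det_eq_one hB,
    ← Matrix.mul_assoc, ← Matrix.mul_assoc,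
    Matrix.mul_nonsing_inv_cancel_right _ _ (isUnit_det_tpow hB)]

end Tilde

/-- `Ψ` is an antihomomorphism; for local unitaries `V, W` one has
`V·U·W·Ψ(V·U·W) = V·U·Ψ(U)·V⁻¹`, and hence the spectrum of `U·Ψ(U)` is invariant
under left and right multiplication of `U` by local unitaries. -/
theorem stmt5 (n : ℕ) :
    (∀ G₁ G₂ : Matrix (Fin n → Fin 2) (Fin n → Fin 2) ℂ,
      tilde n (G₁ * G₂) = tilde n G₂ * tilde n G₁) ∧
    (∀ (Gs Hs : Fin n → Matrix (Fin 2) (Fin 2) ℂ),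
      (∀ j, Gs j ∈ Matrix.specialUnitaryGroup (Fin 2) ℂ) →
      (∀ j, Hs j ∈ Matrix.specialUnitaryGroup (Fin 2) ℂ) →
      ∀ U ∈ Matrix.specialUnitaryGroup (Fin n → Fin 2) ℂ,
        (tpow n Gs * U * tpow n Hs * tilde n (tpow n Gs * U * tpow n Hs) =
          tpow n Gs * U * tilde n U * (tpow n Gs)⁻¹) ∧
        spectrum ℂ (tpow n Gs * U * tpow n Hs * tilde n (tpow n Gs * U * tpow n Hs)) =
          spectrum ℂ (U * tilde n U)) := by
  refine ⟨tilde_mul, fun Gs Hs hGs hHs U _ => ?_⟩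
  have hdetG j : (Gs j).det = 1 := (Matrix.mem_specialUnitaryGroup_iff.mp (hGs j)).2
  have hdetH j : (Hs j).det = 1 := (Matrix.mem_specialUnitaryGroup_iff.mp (hHs j)).2
  have hconj := tpow_mul_mul_tpow_mul_tilde hdetG hdetH U
  refine ⟨hconj, ?_⟩
  let V := ((Matrix.isUnit_iff_isUnit_det _).mpr (isUnit_det_tpow hdetG)).unit
  have hV : (V : Matrix (Fin n → Fin 2) (Fin n → Fin 2) ℂ) = tpow n Gs := rfl
  rw [hconj, ← hV, ← Matrix.coe_units_inv, Matrix.mul_assoc _ U]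
  exact spectrum.units_conjugate
end

section
/- With Q = (1/√2)·[[1,0,0,i],[0,i,1,0],[0,i,−1,0],[1,0,0,−i]], for every pair U₁,U₂ ∈ SU(2) the matrix Q⁻¹ (U₁⊗U₂) Q is real orthogonal (an element of SO(4)). Moreover Q is unitary. -/
open Matrix Kronecker Complex

noncomputable def sigma0 : Matrix (Fin 2) (Fin 2) ℂ := 1
noncomputable def sigma1 : Matrix (Fin 2) (Fin 2) ℂ := !![0, 1; 1, 0]
noncomputable def sigma2 : Matrix (Fin 2) (Fin 2) ℂ := !![0, -I; I, 0]
noncomputable def sigma3 : Matrix (Fin 2) (Fin 2) ℂ := !![1, 0; 0, -1]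

/-- Reindexing of a two-qubit matrix (indexed by `Fin 2 × Fin 2`) as a `4 × 4` matrix. -/
noncomputable def toF4 (M : Matrix (Fin 2 × Fin 2) (Fin 2 × Fin 2) ℂ) :
    Matrix (Fin 4) (Fin 4) ℂ :=
  Matrix.reindex finProdFinEquiv finProdFinEquiv M

/-- The magic-basis change matrix. -/
noncomputable def Qmagic : Matrix (Fin 4) (Fin 4) ℂ :=
  (((Real.sqrt 2)⁻¹ : ℝ) : ℂ) •
    !![1, 0, 0, I; 0, I, 1, 0; 0, I, -1, 0; 1, 0, 0, -I]

/-!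
Write `S = σ_y ⊗ σ_y`. For a `2 × 2` matrix `σ_y Mᵀ σ_y` is the adjugate of `M`, and for
`U ∈ SU(2)` we have `Uᴴ = U⁻¹ = adj U`; hence `σ_y Ū σ_y = adj (adj U) = U`, and so
`S (U₁ ⊗ U₂)‾ S = U₁ ⊗ U₂`. The magic basis satisfies `Q̄ = -S Q`, so `M = Q⁻¹ (U₁ ⊗ U₂) Q`
is fixed by entrywise conjugation, i.e. real. As a unitary conjugate of an element of `SU(4)`
it lies in `SU(4)`, and a real matrix in `SU(4)` lies in `SO(4)`.
-/

namespace Matrix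

theorem exists_map_ofReal_eq_of_map_conj_eq {m n : Type*} {M : Matrix m n ℂ}
    (hM : M.map (starRingEnd ℂ) = M) : ∃ R : Matrix m n ℝ, R.map ofReal = M :=
  ⟨M.map re, ext fun i j => conj_eq_iff_re.mp (congrFun (congrFun hM i) j)⟩

variable {m n : Type*} [Fintype m] [DecidableEq m] [Fintype n] [DecidableEq n]
  {α : Type*} [CommRing α] [StarRing α]

theorem star_eq_adjugate_of_mem_specialUnitaryGroup {U : Matrix n n α}
    (hU : U ∈ specialUnitaryGroup n α) : star U = adjugate U := by
  obtain ⟨hUu, hUd⟩ := mem_specialUnitaryGroup_iff.mp hU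
  rw [← inv_eq_left_inv (mem_unitaryGroup_iff'.mp hUu), inv_def, hUd, Ring.inverse_one, one_smul]

theorem reindex_mem_specialUnitaryGroup (e : m ≃ n) {U : Matrix m m α}
    (hU : U ∈ specialUnitaryGroup m α) : reindex e e U ∈ specialUnitaryGroup n α := by
  obtain ⟨hUu, hUd⟩ := mem_specialUnitaryGroup_iff.mp hU
  refine mem_specialUnitaryGroup_iff.mpr ⟨mem_unitaryGroup_iff'.mpr ?_, by rwa [det_reindex_self]⟩
  rw [reindex_apply, star_eq_conjTranspose, conjTranspose_submatrix, submatrix_mul_equiv,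
    ← star_eq_conjTranspose, mem_unitaryGroup_iff'.mp hUu, submatrix_one_equiv]

theorem kronecker_mem_specialUnitaryGroup {U : Matrix m m α} {V : Matrix n n α}
    (hU : U ∈ specialUnitaryGroup m α) (hV : V ∈ specialUnitaryGroup n α) :
    U ⊗ₖ V ∈ specialUnitaryGroup (m × n) α := by
  obtain ⟨hUu, hUd⟩ := mem_specialUnitaryGroup_iff.mp hU
  obtain ⟨hVu, hVd⟩ := mem_specialUnitaryGroup_iff.mp hV
  exact mem_specialUnitaryGroup_iff.mpr
    ⟨kronecker_mem_unitary hUu hVu, by rw [det_kronecker, hUd, hVd, one_pow, one_pow, one_mul]⟩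

theorem star_mul_mul_mem_specialUnitaryGroup {Q X : Matrix n n α}
    (hQ : Q ∈ unitaryGroup n α) (hX : X ∈ specialUnitaryGroup n α) :
    star Q * X * Q ∈ specialUnitaryGroup n α := by
  obtain ⟨hXu, hXd⟩ := mem_specialUnitaryGroup_iff.mp hX
  refine mem_specialUnitaryGroup_iff.mpr ⟨mul_mem (mul_mem (Unitary.star_mem hQ) hXu) hQ, ?_⟩
  rw [det_mul, det_mul, hXd, mul_one, ← det_mul, mem_unitaryGroup_iff'.mp hQ, det_one]

theorem mem_specialOrthogonalGroup_of_map_ofReal {R : Matrix n n ℝ}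
    (hR : R.map ofReal ∈ specialUnitaryGroup n ℂ) : R ∈ specialOrthogonalGroup n ℝ := by
  obtain ⟨hRu, hRd⟩ := mem_specialUnitaryGroup_iff.mp hR
  have hstar : ofRealHom.mapMatrix (star R) = star (R.map ofReal) := by
    ext i j
    simp
  refine mem_specialUnitaryGroup_iff.mpr
    ⟨mem_unitaryGroup_iff'.mpr (map_injective ofReal_injective ?_), ofReal_injective ?_⟩
  · change ofRealHom.mapMatrix (star R * R) = ofRealHom.mapMatrix 1
    rw [map_mul, map_one, hstar]
    exact mem_unitaryGroup_iff'.mp hRu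
  · rw [ofReal_one, ← hRd]
    exact RingHom.map_det ofRealHom R

end Matrix

theorem sigma2_mul_transpose_mul_sigma2 (M : Matrix (Fin 2) (Fin 2) ℂ) :
    sigma2 * Mᵀ * sigma2 = adjugate M := by
  rw [adjugate_fin_two]
  ext i j
  fin_cases i <;> fin_cases j <;>
    simp [sigma2, mul_apply, Fin.sum_univ_two, vecMul, dotProduct] <;> ring_nf <;> simp

theorem sigma2_mul_map_conj_mul_sigma2 {U : Matrix (Fin 2) (Fin 2) ℂ}
    (hU : U ∈ specialUnitaryGroup (Fin 2) ℂ) : sigma2 * U.map (starRingEnd ℂ) * sigma2 = U := by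
  have hconj : U.map (starRingEnd ℂ) = (star U)ᵀ := rfl
  rw [hconj, sigma2_mul_transpose_mul_sigma2, star_eq_adjugate_of_mem_specialUnitaryGroup hU,
    adjugate_adjugate _ (by simp), (mem_specialUnitaryGroup_iff.mp hU).2, one_pow, one_smul]

theorem toF4_mul (A B : Matrix (Fin 2 × Fin 2) (Fin 2 × Fin 2) ℂ) :
    toF4 (A * B) = toF4 A * toF4 B :=
  map_mul (reindexAlgEquiv ℂ ℂ finProdFinEquiv) A B

theorem toF4_map (f : ℂ → ℂ) (A : Matrix (Fin 2 × Fin 2) (Fin 2 × Fin 2) ℂ) :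
    toF4 (A.map f) = (toF4 A).map f :=
  submatrix_map _ _ _ _

theorem toF4_kronecker_map_conj {U₁ U₂ : Matrix (Fin 2) (Fin 2) ℂ}
    (h₁ : U₁ ∈ specialUnitaryGroup (Fin 2) ℂ) (h₂ : U₂ ∈ specialUnitaryGroup (Fin 2) ℂ) :
    toF4 (sigma2 ⊗ₖ sigma2) * (toF4 (U₁ ⊗ₖ U₂)).map (starRingEnd ℂ) *
      toF4 (sigma2 ⊗ₖ sigma2) = toF4 (U₁ ⊗ₖ U₂) := by
  have hmap : (U₁ ⊗ₖ U₂).map (starRingEnd ℂ) =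
      U₁.map (starRingEnd ℂ) ⊗ₖ U₂.map (starRingEnd ℂ) := by
    simp only [kroneckerMap_map, map_mul]
    rfl
  rw [← toF4_map, hmap, ← toF4_mul, ← toF4_mul, ← mul_kronecker_mul, ← mul_kronecker_mul,
    sigma2_mul_map_conj_mul_sigma2 h₁, sigma2_mul_map_conj_mul_sigma2 h₂]

theorem toF4_sigma2_kronecker_sigma2 :
    toF4 (sigma2 ⊗ₖ sigma2) = !![0, 0, 0, -1; 0, 0, 1, 0; 0, 1, 0, 0; -1, 0, 0, 0] := by
  ext i j
  fin_cases i <;> fin_cases j <;> simp [toF4, sigma2, finProdFinEquiv, Fin.divNat, Fin.modNat]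

theorem star_toF4_sigma2_kronecker_sigma2 :
    star (toF4 (sigma2 ⊗ₖ sigma2)) = toF4 (sigma2 ⊗ₖ sigma2) := by
  rw [toF4_sigma2_kronecker_sigma2]
  ext i j
  fin_cases i <;> fin_cases j <;> simp

theorem Qmagic_mem_unitaryGroup : Qmagic ∈ unitaryGroup (Fin 4) ℂ := by
  rw [mem_unitaryGroup_iff']
  ext i j
  fin_cases i <;> fin_cases j <;>
    simp [Qmagic, mul_apply, Fin.sum_univ_four, star_apply, one_apply] <;>
    ring_nf <;> simp [← ofReal_pow]

theorem Qmagic_map_conj :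
    Qmagic.map (starRingEnd ℂ) = -(toF4 (sigma2 ⊗ₖ sigma2) * Qmagic) := by
  rw [toF4_sigma2_kronecker_sigma2]
  ext i j
  fin_cases i <;> fin_cases j <;> simp [Qmagic]

theorem map_conj_star_Qmagic_mul_mul_Qmagic (X : Matrix (Fin 4) (Fin 4) ℂ) :
    (star Qmagic * X * Qmagic).map (starRingEnd ℂ) =
      star Qmagic * (toF4 (sigma2 ⊗ₖ sigma2) * X.map (starRingEnd ℂ) *
        toF4 (sigma2 ⊗ₖ sigma2)) * Qmagic := by
  have hstar : (star Qmagic).map (starRingEnd ℂ) = star (Qmagic.map (starRingEnd ℂ)) :=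
    conjTranspose_map _ fun _ => rfl
  rw [Matrix.map_mul, Matrix.map_mul, hstar, Qmagic_map_conj, star_neg, star_mul,
    star_toF4_sigma2_kronecker_sigma2]
  noncomm_ring

/-- `Q` is unitary and conjugation by `Q` maps local unitaries `U₁ ⊗ U₂`
(`U₁, U₂ ∈ SU(2)`) into `SO(4)`. -/
theorem stmt10 :
    Qmagic ∈ Matrix.unitaryGroup (Fin 4) ℂ ∧
    ∀ U₁ U₂ : Matrix (Fin 2) (Fin 2) ℂ,
      U₁ ∈ Matrix.specialUnitaryGroup (Fin 2) ℂ →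
      U₂ ∈ Matrix.specialUnitaryGroup (Fin 2) ℂ →
      ∃ R : Matrix (Fin 4) (Fin 4) ℝ,
        R ∈ Matrix.specialOrthogonalGroup (Fin 4) ℝ ∧
        Qmagic⁻¹ * toF4 (U₁ ⊗ₖ U₂) * Qmagic = R.map Complex.ofReal := by
  refine ⟨Qmagic_mem_unitaryGroup, fun U₁ U₂ h₁ h₂ => ?_⟩
  rw [inv_eq_left_inv (mem_unitaryGroup_iff'.mp Qmagic_mem_unitaryGroup)]
  have hSU : star Qmagic * toF4 (U₁ ⊗ₖ U₂) * Qmagic ∈ specialUnitaryGroup (Fin 4) ℂ :=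
    star_mul_mul_mem_specialUnitaryGroup Qmagic_mem_unitaryGroup
      (reindex_mem_specialUnitaryGroup _ (kronecker_mem_specialUnitaryGroup h₁ h₂))
  obtain ⟨R, hR⟩ := exists_map_ofReal_eq_of_map_conj_eq
    (M := star Qmagic * toF4 (U₁ ⊗ₖ U₂) * Qmagic)
    (by rw [map_conj_star_Qmagic_mul_mul_Qmagic, toF4_kronecker_map_conj h₁ h₂])
  exact ⟨R, mem_specialOrthogonalGroup_of_map_ofReal (hR ▸ hSU), hR.symm⟩
end

section
/- With Q the magic-basis change matrix, for all real a₇,a₈,a₉ the matrix Q⁻¹ exp(a₇X₇+a₈X₈+a₉X₉) Q is diagonal, where X₇=(i/2)σ₁⊗σ₁, X₈=(i/2)σ₂⊗σ₂, X₉=(i/2)σ₃⊗σ₃. -/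
open Matrix Kronecker Complex

noncomputable def X7 : Matrix (Fin 2 × Fin 2) (Fin 2 × Fin 2) ℂ := (I / 2) • (sigma1 ⊗ₖ sigma1)
noncomputable def X8 : Matrix (Fin 2 × Fin 2) (Fin 2 × Fin 2) ℂ := (I / 2) • (sigma2 ⊗ₖ sigma2)
noncomputable def X9 : Matrix (Fin 2 × Fin 2) (Fin 2 × Fin 2) ℂ := (I / 2) • (sigma3 ⊗ₖ sigma3)

/-!
The columns of the magic basis (the Bell states, up to phases) are common eigenvectors of
`σ₁ ⊗ σ₁`, `σ₂ ⊗ σ₂` and `σ₃ ⊗ σ₃`, so `Q` conjugates `a₇X₇ + a₈X₈ + a₉X₉` to a diagonal matrix.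
Since `Q` is unitary, `Q⁻¹ exp(N) Q = exp(Q⁻¹ N Q)`, and the exponential of a diagonal matrix
is diagonal.
-/

open NormedSpace

namespace Matrix

variable {m : Type*} [Fintype m] [DecidableEq m]

theorem inv_mul_mul_eq_of_mul_eq {R : Type*} [CommRing R] {P A D : Matrix m m R}
    (hP : IsUnit P) (h : A * P = P * D) : P⁻¹ * A * P = D := by
  rw [mul_assoc, h, ← mul_assoc, nonsing_inv_mul P ((isUnit_iff_isUnit_det P).mp hP), one_mul]

theorem IsDiag.exp {𝔸 : Type*} [Ring 𝔸] [TopologicalSpace 𝔸] [IsTopologicalRing 𝔸] [T2Space 𝔸]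
    [Algebra ℚ 𝔸] {A : Matrix m m 𝔸} (h : A.IsDiag) : (exp A).IsDiag := by
  rw [isDiag_iff_diagonal_diag] at h
  rw [← h, exp_diagonal]
  exact isDiag_diagonal _

theorem isDiag_inv_mul_exp_mul {𝔸 : Type*} [NormedCommRing 𝔸] [NormedAlgebra ℚ 𝔸]
    [CompleteSpace 𝔸] {P A : Matrix m m 𝔸} (hP : IsUnit P) (h : (P⁻¹ * A * P).IsDiag) :
    (P⁻¹ * exp A * P).IsDiag := by
  rw [← exp_conj' P A hP]
  exact h.exp

end Matrix

noncomputable def magicBasis : Matrix (Fin 4) (Fin 4) ℂ :=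
  !![1, 0, 0, I; 0, I, 1, 0; 0, I, -1, 0; 1, 0, 0, -I]

theorem Qmagic_eq_smul : Qmagic = (((Real.sqrt 2)⁻¹ : ℝ) : ℂ) • magicBasis := rfl

theorem magicBasis_mul_conjTranspose : magicBasis * magicBasisᴴ = (2 : ℂ) • 1 := by
  ext i j
  fin_cases i <;> fin_cases j <;>
    simp [magicBasis, Matrix.mul_apply, Fin.sum_univ_four] <;> ring

theorem Qmagic_mul_conjTranspose : Qmagic * Qmagicᴴ = 1 := by
  have hc : (((Real.sqrt 2)⁻¹ : ℝ) : ℂ) * (((Real.sqrt 2)⁻¹ : ℝ) : ℂ) * 2 = 1 := by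
    rw [← Complex.ofReal_mul, ← mul_inv, Real.mul_self_sqrt zero_le_two]
    norm_num
  rw [Qmagic_eq_smul, conjTranspose_smul, Complex.star_def, Complex.conj_ofReal, smul_mul_smul,
    magicBasis_mul_conjTranspose, smul_smul, hc, one_smul]

theorem isUnit_Qmagic : IsUnit Qmagic :=
  (isUnit_iff_isUnit_det _).mpr (isUnit_det_of_right_inverse Qmagic_mul_conjTranspose)

theorem toF4_cartan_eq (a7 a8 a9 : ℝ) : toF4 (a7 • X7 + a8 • X8 + a9 • X9) =
    !![I/2*a9, 0, 0, I/2*(a7-a8);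
       0, -(I/2)*a9, I/2*(a7+a8), 0;
       0, I/2*(a7+a8), -(I/2)*a9, 0;
       I/2*(a7-a8), 0, 0, I/2*a9] := by
  ext i j
  fin_cases i <;> fin_cases j <;>
    norm_num [toF4, X7, X8, X9, sigma1, sigma2, sigma3, finProdFinEquiv, Fin.divNat, Fin.modNat,
      vecHead, vecTail, show ((3 : Fin 4) : ℕ) = 3 from rfl, show ((2 : Fin 4) : ℕ) = 2 from rfl]
    <;> ring

noncomputable def magicEigenvalues (a7 a8 a9 : ℝ) : Fin 4 → ℂ :=
  ![I/2*(a7-a8+a9), I/2*(a7+a8-a9), -(I/2)*(a7+a8+a9), I/2*(-a7+a8+a9)]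

theorem toF4_cartan_mul_magicBasis (a7 a8 a9 : ℝ) :
    toF4 (a7 • X7 + a8 • X8 + a9 • X9) * magicBasis =
      magicBasis * diagonal (magicEigenvalues a7 a8 a9) := by
  rw [toF4_cartan_eq]
  ext i j
  fin_cases i <;> fin_cases j <;>
    simp [magicBasis, magicEigenvalues, Matrix.mul_apply, Fin.sum_univ_four] <;> ring

/-- Elements of `A = exp 𝔞` are diagonal in the magic basis. -/
theorem stmt11 (a7 a8 a9 : ℝ) :
    (Qmagic⁻¹ * NormedSpace.exp (toF4 (a7 • X7 + a8 • X8 + a9 • X9)) * Qmagic).IsDiag := by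
  have hconj : toF4 (a7 • X7 + a8 • X8 + a9 • X9) * Qmagic =
      Qmagic * diagonal (magicEigenvalues a7 a8 a9) := by
    rw [Qmagic_eq_smul, mul_smul_comm, toF4_cartan_mul_magicBasis, smul_mul_assoc]
  apply isDiag_inv_mul_exp_mul isUnit_Qmagic
  rw [inv_mul_mul_eq_of_mul_eq isUnit_Qmagic hconj]
  exact isDiag_diagonal _
end

section
/- Let A, B be Hermitian k×k matrices. Then spec(A+B) ≺ spec(A) + spec(B), i.e., the decreasingly-ordered eigenvalue vector of A+B is majorized by the sum of the decreasingly-ordered eigenvalue vectors of A and B. -/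
open Matrix

/-- The entries of `x` rearranged in decreasing order. -/
noncomputable def sortDesc {k : ℕ} (x : Fin k → ℝ) : Fin k → ℝ :=
  fun i => x (Tuple.sort x i.rev)

/-- `IsMajorizedBy x y` (usually written `x ≺ y`) means: for every `l ≤ k` the sum of
the `l` largest entries of `x` is at most that of `y`, with equality of total sums. -/
def IsMajorizedBy {k : ℕ} (x y : Fin k → ℝ) : Prop :=
  (∀ l : ℕ, l ≤ k →
      ∑ i ∈ Finset.univ.filter (fun i : Fin k => (i : ℕ) < l), sortDesc x i ≤
      ∑ i ∈ Finset.univ.filter (fun i : Fin k => (i : ℕ) < l), sortDesc y i) ∧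
  ∑ i, x i = ∑ i, y i

/-- The decreasingly-ordered eigenvalue vector of a Hermitian matrix. -/
noncomputable def specDesc {k : ℕ} (A : Matrix (Fin k) (Fin k) ℂ)
    (hA : A.IsHermitian) : Fin k → ℝ :=
  sortDesc hA.eigenvalues

lemma sortDesc_antitone {k : ℕ} (x : Fin k → ℝ) : Antitone (sortDesc x) := by
  intro i j hij
  exact Tuple.monotone_sort x (Fin.rev_le_rev.mpr hij)

lemma sortDesc_of_antitone {k : ℕ} {x : Fin k → ℝ} (hx : Antitone x) : sortDesc x = x := by
  have h : x ∘ Fin.revPerm = x ∘ Tuple.sort x :=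
    (Tuple.comp_sort_eq_comp_iff_monotone).mpr
      (fun i j hij => hx (Fin.rev_le_rev.mpr hij))
  funext i
  have := congrFun h.symm i.rev
  simpa [sortDesc, Fin.rev_rev] using this

lemma sum_sortDesc {k : ℕ} (x : Fin k → ℝ) : ∑ i, sortDesc x i = ∑ i, x i := by
  unfold sortDesc
  rw [← Equiv.sum_comp (Fin.revPerm.trans (Tuple.sort x)) x]
  rfl

lemma sum_filter_lt_eq {k l : ℕ} (hl : l ≤ k) (g : Fin k → ℝ) :
    ∑ i ∈ Finset.univ.filter (fun i : Fin k => (i : ℕ) < l), g i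
      = ∑ i : Fin l, g (Fin.castLE hl i) := by
  refine (Finset.sum_bij' (fun (i : Fin k) hi => (⟨(i : ℕ), (Finset.mem_filter.mp hi).2⟩ : Fin l))
    (fun (i : Fin l) _ => Fin.castLE hl i) ?_ ?_ ?_ ?_ ?_) <;>
    simp [Fin.ext_iff]

lemma card_filter_lt {k l : ℕ} (hl : l ≤ k) :
    (Finset.univ.filter (fun i : Fin k => (i : ℕ) < l)).card = l := by
  have := sum_filter_lt_eq hl (fun _ => (1 : ℝ))
  simpa using this

lemma key_ineq {k : ℕ} {μ c : Fin k → ℝ} (hμ : Antitone μ) (hc0 : ∀ j, 0 ≤ c j)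
    (hc1 : ∀ j, c j ≤ 1) {l : ℕ} (hl : l ≤ k) (hsum : ∑ j, c j = l) :
    ∑ j, μ j * c j ≤ ∑ i ∈ Finset.univ.filter (fun i : Fin k => (i : ℕ) < l), μ i := by
  rcases Nat.eq_zero_or_pos l with rfl | hpos
  · have hz : ∀ j ∈ Finset.univ, c j = 0 := by
      intro j _
      exact (Finset.sum_eq_zero_iff_of_nonneg (fun j _ => hc0 j)).mp (by simpa using hsum) j
        (Finset.mem_univ j)
    have : ∀ j ∈ Finset.univ, μ j * c j = 0 := fun j hj => by rw [hz j hj, mul_zero]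
    rw [Finset.sum_eq_zero this]
    simp
  · have hlk : l - 1 < k := by omega
    set t := μ ⟨l - 1, hlk⟩ with ht
    have hstep : ∀ j : Fin k, (μ j - t) * c j ≤ if (j : ℕ) < l then μ j - t else 0 := by
      intro j
      split_ifs with h
      · have : t ≤ μ j := hμ (by simp [Fin.le_def]; omega)
        nlinarith [hc0 j, hc1 j]
      · have : μ j ≤ t := hμ (by simp [Fin.le_def]; omega)
        nlinarith [hc0 j]
    have h1 : ∑ j, μ j * c j = (∑ j, (μ j - t) * c j) + t * l := by
      rw [← hsum, Finset.mul_sum, ← Finset.sum_add_distrib]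
      congr 1; funext j; ring
    have h2 : (∑ j, (μ j - t) * c j) ≤ ∑ j : Fin k, if (j : ℕ) < l then μ j - t else 0 :=
      Finset.sum_le_sum (fun j _ => hstep j)
    have h3 : (∑ j : Fin k, if (j : ℕ) < l then μ j - t else 0)
        = ∑ i ∈ Finset.univ.filter (fun i : Fin k => (i : ℕ) < l), (μ i - t) :=
      (Finset.sum_filter _ _).symm
    have h4 : ∑ i ∈ Finset.univ.filter (fun i : Fin k => (i : ℕ) < l), (μ i - t)
        = (∑ i ∈ Finset.univ.filter (fun i : Fin k => (i : ℕ) < l), μ i) - t * l := by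
      rw [Finset.sum_sub_distrib, Finset.sum_const, card_filter_lt hl]
      ring
    linarith

lemma trace_bound {k l : ℕ} (hl : l ≤ k) {A : Matrix (Fin k) (Fin k) ℂ} (hA : A.IsHermitian)
    (W : Matrix (Fin k) (Fin l) ℂ) (hW : Wᴴ * W = 1) :
    (trace (Wᴴ * A * W)).re ≤
      ∑ i ∈ Finset.univ.filter (fun i : Fin k => (i : ℕ) < l), specDesc A hA i := by
  classical
  set U : Matrix (Fin k) (Fin k) ℂ := (hA.eigenvectorUnitary : Matrix (Fin k) (Fin k) ℂ) with hU
  set lam := hA.eigenvalues with hlam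
  set V : Matrix (Fin k) (Fin l) ℂ := Uᴴ * W with hV
  have hUU : U * Uᴴ = 1 := by
    rw [← star_eq_conjTranspose]
    exact Unitary.coe_mul_star_self hA.eigenvectorUnitary
  have hUU' : Uᴴ * U = 1 := by
    rw [← star_eq_conjTranspose]
    exact Unitary.coe_star_mul_self hA.eigenvectorUnitary
  have hVV : Vᴴ * V = 1 := by
    rw [hV, conjTranspose_mul, conjTranspose_conjTranspose, ← Matrix.mul_assoc,
      Matrix.mul_assoc Wᴴ U Uᴴ, hUU, Matrix.mul_one, hW]
  have hdiag : Wᴴ * A * W = Vᴴ * diagonal (RCLike.ofReal ∘ lam : Fin k → ℂ) * V := by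
    have hs := hA.spectral_theorem
    rw [Unitary.conjStarAlgAut_apply, star_eq_conjTranspose] at hs
    rw [hV, conjTranspose_mul, conjTranspose_conjTranspose]
    calc Wᴴ * A * W = Wᴴ * (U * diagonal (RCLike.ofReal ∘ lam : Fin k → ℂ) * Uᴴ) * W := by rw [← hs]
      _ = Wᴴ * U * diagonal (RCLike.ofReal ∘ lam : Fin k → ℂ) * (Uᴴ * W) := by
          simp only [← Matrix.mul_assoc]
  set c : Fin k → ℝ := fun j => ∑ i, Complex.normSq (V j i) with hc
  have htr : (trace (Wᴴ * A * W)).re = ∑ j, lam j * c j := by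
    rw [hdiag]
    have e1 : trace (Vᴴ * diagonal (RCLike.ofReal ∘ lam : Fin k → ℂ) * V)
        = ∑ i, ∑ j, ((lam j : ℂ) * (Complex.normSq (V j i) : ℂ)) := by
      rw [trace]
      congr 1
      funext i
      rw [diag]
      rw [Matrix.mul_apply]
      congr 1
      funext j
      rw [Matrix.mul_diagonal, conjTranspose_apply]
      simp only [Function.comp_apply, RCLike.ofReal_alg, Complex.real_smul, mul_one,
        Complex.star_def]
      rw [show (starRingEnd ℂ) (V j i) * ((lam j : ℂ)) * V j i
          = (lam j : ℂ) * ((starRingEnd ℂ) (V j i) * V j i) from by ring,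
        ← Complex.normSq_eq_conj_mul_self]
    rw [e1]
    simp only [Complex.re_sum, ← Complex.ofReal_mul, Complex.ofReal_re]
    rw [Finset.sum_comm, hc]
    simp [Finset.mul_sum]
  have hc0 : ∀ j, 0 ≤ c j := fun j => Finset.sum_nonneg fun i _ => Complex.normSq_nonneg _
  have hc1 : ∀ j, c j ≤ 1 := by
    intro j
    set P : Matrix (Fin k) (Fin k) ℂ := V * Vᴴ with hP
    have hPP : P * P = P := by
      rw [hP, Matrix.mul_assoc, ← Matrix.mul_assoc Vᴴ V Vᴴ, hVV, Matrix.one_mul]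
    have hPH : Pᴴ = P := by
      rw [hP, conjTranspose_mul, conjTranspose_conjTranspose]
    have hPjj : P j j = (c j : ℂ) := by
      rw [hP, Matrix.mul_apply, hc]
      push_cast
      congr 1
      funext i
      rw [conjTranspose_apply, Complex.star_def, Complex.mul_conj]
    have hkey : (c j : ℂ) = ∑ m, (Complex.normSq (P j m) : ℂ) := by
      calc (c j : ℂ) = P j j := hPjj.symm
        _ = (P * P) j j := by rw [hPP]
        _ = ∑ m, P j m * P m j := Matrix.mul_apply
        _ = ∑ m, (Complex.normSq (P j m) : ℂ) := by
            congr 1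
            funext m
            have : P m j = (starRingEnd ℂ) (P j m) := by
              conv_lhs => rw [← hPH]
              rw [conjTranspose_apply]
              rfl
            rw [this, Complex.mul_conj]
    have hkeyre : c j = ∑ m, Complex.normSq (P j m) := by
      have := congrArg Complex.re hkey
      simpa [Complex.re_sum] using this
    have h1 : Complex.normSq (P j j) ≤ ∑ m, Complex.normSq (P j m) :=
      Finset.single_le_sum (f := fun m => Complex.normSq (P j m))
        (fun m _ => Complex.normSq_nonneg _) (Finset.mem_univ j)
    have h2 : Complex.normSq (P j j) = c j ^ 2 := by
      rw [hPjj, Complex.normSq_ofReal]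
      ring
    have h3 : c j ^ 2 ≤ c j := by
      rw [← h2, hkeyre]; exact h1
    nlinarith [hc0 j]
  have hcsum : ∑ j, c j = l := by
    have e1 : trace (Vᴴ * V) = (l : ℂ) := by rw [hVV, trace_one]; simp
    have e2 : trace (Vᴴ * V) = ∑ i, ∑ j, (Complex.normSq (V j i) : ℂ) := by
      rw [trace]
      congr 1
      funext i
      rw [diag, Matrix.mul_apply]
      congr 1
      funext j
      rw [conjTranspose_apply, Complex.star_def, ← Complex.normSq_eq_conj_mul_self]
    have := e1.symm.trans e2
    have hre := congrArg Complex.re this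
    simp only [Complex.re_sum, Complex.ofReal_re, Complex.natCast_re] at hre
    rw [hc]
    rw [Finset.sum_comm] at hre
    exact hre.symm
  -- reindex by the sorting permutation
  set σ : Equiv.Perm (Fin k) := Fin.revPerm.trans (Tuple.sort lam) with hσ
  have hre : ∑ j, lam j * c j = ∑ j, specDesc A hA j * c (σ j) := by
    rw [← Equiv.sum_comp σ (fun j => lam j * c j)]
    rfl
  rw [htr, hre]
  exact key_ineq (sortDesc_antitone _) (fun j => hc0 _) (fun j => hc1 _) hl
    (by rw [Equiv.sum_comp σ c]; exact hcsum)

lemma sum_eig_eq_trace_re {k : ℕ} {M : Matrix (Fin k) (Fin k) ℂ} (hM : M.IsHermitian) :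
    ∑ i, hM.eigenvalues i = (trace M).re := by
  have hUU' : (hM.eigenvectorUnitary : Matrix (Fin k) (Fin k) ℂ)ᴴ
      * (hM.eigenvectorUnitary : Matrix (Fin k) (Fin k) ℂ) = 1 := by
    rw [← star_eq_conjTranspose]; exact Unitary.coe_star_mul_self _
  have e1 : trace M = trace (diagonal (RCLike.ofReal ∘ hM.eigenvalues) :
      Matrix (Fin k) (Fin k) ℂ) := by
    conv_lhs => rw [hM.spectral_theorem]
    rw [Unitary.conjStarAlgAut_apply, star_eq_conjTranspose, trace_mul_comm, ← Matrix.mul_assoc, hUU',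
      Matrix.one_mul]
  rw [e1, trace_diagonal]
  rw [Complex.re_sum]
  simp

lemma trace_top {k l : ℕ} (hl : l ≤ k) {M : Matrix (Fin k) (Fin k) ℂ} (hM : M.IsHermitian) :
    ∃ W : Matrix (Fin k) (Fin l) ℂ, Wᴴ * W = 1 ∧
      (trace (Wᴴ * M * W)).re
        = ∑ i ∈ Finset.univ.filter (fun i : Fin k => (i : ℕ) < l), specDesc M hM i := by
  classical
  set U : Matrix (Fin k) (Fin k) ℂ := (hM.eigenvectorUnitary : Matrix (Fin k) (Fin k) ℂ)
    with hU
  set lam := hM.eigenvalues with hlam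
  set σ : Equiv.Perm (Fin k) := Fin.revPerm.trans (Tuple.sort lam) with hσ
  set col : Fin l → Fin k := fun i => σ (Fin.castLE hl i) with hcol
  have hcolinj : Function.Injective col := fun a b h =>
    Fin.castLE_injective hl (σ.injective h)
  have hUU' : Uᴴ * U = 1 := by
    rw [← star_eq_conjTranspose]; exact Unitary.coe_star_mul_self _
  refine ⟨U.submatrix id col, ?_, ?_⟩
  · ext i i'
    have e : ((U.submatrix id col)ᴴ * U.submatrix id col) i i' = (Uᴴ * U) (col i) (col i') := by
      simp [Matrix.mul_apply, conjTranspose_apply, Matrix.submatrix_apply]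
    rw [e, hUU']
    by_cases h : i = i'
    · subst h; simp
    · rw [Matrix.one_apply_ne (fun hc => h (hcolinj hc)), Matrix.one_apply_ne h]
  · have hsub : (U.submatrix id col)ᴴ * M * U.submatrix id col
        = (Uᴴ * M * U).submatrix col col := by
      rw [Matrix.submatrix_mul (Uᴴ * M) U col id col Function.bijective_id,
        Matrix.submatrix_mul Uᴴ M col id id Function.bijective_id,
        Matrix.submatrix_id_id, conjTranspose_submatrix]
    have hdg : Uᴴ * M * U = diagonal (RCLike.ofReal ∘ lam) := by
      rw [← star_eq_conjTranspose]
      have := hM.conjStarAlgAut_star_eigenvectorUnitary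
      rw [Unitary.conjStarAlgAut_apply, Unitary.coe_star, star_star] at this
      exact this
    rw [hsub, hdg]
    have e2 : trace ((diagonal (RCLike.ofReal ∘ lam)).submatrix col col)
        = ∑ i : Fin l, ((lam (col i) : ℂ)) := by
      rw [trace]
      congr 1
      funext i
      rw [diag, Matrix.submatrix_apply, diagonal_apply_eq]
      rfl
    rw [e2, Complex.re_sum, sum_filter_lt_eq hl]
    simp only [Complex.ofReal_re]
    rfl

/-- Ky Fan: `spec(A+B) ≺ spec(A) + spec(B)` for Hermitian `A`, `B`. -/
theorem stmt12 {k : ℕ} (A B : Matrix (Fin k) (Fin k) ℂ)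
    (hA : A.IsHermitian) (hB : B.IsHermitian) :
    IsMajorizedBy (specDesc (A + B) (hA.add hB)) (specDesc A hA + specDesc B hB) := by
  constructor
  · intro l hl
    obtain ⟨W, hW, htr⟩ := trace_top hl (hA.add hB)
    have hsplit : Wᴴ * (A + B) * W = Wᴴ * A * W + Wᴴ * B * W := by
      rw [Matrix.mul_add, Matrix.add_mul]
    have h1 := trace_bound hl hA W hW
    have h2 := trace_bound hl hB W hW
    have hxa : sortDesc (specDesc (A + B) (hA.add hB)) = specDesc (A + B) (hA.add hB) :=
      sortDesc_of_antitone (sortDesc_antitone _)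
    have hy : sortDesc (specDesc A hA + specDesc B hB) = specDesc A hA + specDesc B hB :=
      sortDesc_of_antitone ((sortDesc_antitone _).add (sortDesc_antitone _))
    rw [hxa, hy]
    have hsplit2 : ∑ i ∈ Finset.univ.filter (fun i : Fin k => (i : ℕ) < l),
          (specDesc A hA + specDesc B hB) i
        = (∑ i ∈ Finset.univ.filter (fun i : Fin k => (i : ℕ) < l), specDesc A hA i)
          + ∑ i ∈ Finset.univ.filter (fun i : Fin k => (i : ℕ) < l), specDesc B hB i := by
      simp [Finset.sum_add_distrib]
    rw [hsplit2, ← htr, hsplit, trace_add, Complex.add_re]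
    exact add_le_add h1 h2
  · have e1 : ∑ i, specDesc (A + B) (hA.add hB) i = (trace (A + B)).re := by
      rw [specDesc, sum_sortDesc, sum_eig_eq_trace_re]
    have e2 : ∑ i, (specDesc A hA + specDesc B hB) i
        = (trace A).re + (trace B).re := by
      simp only [Pi.add_apply, Finset.sum_add_distrib]
      rw [specDesc, specDesc, sum_sortDesc, sum_sortDesc,
        sum_eig_eq_trace_re hA, sum_eig_eq_trace_re hB]
    rw [e1, e2, trace_add, Complex.add_re]
end

section
/- A vector x ∈ ℝᵏ is majorized by y ∈ ℝᵏ if and only if x lies in the convex hull of the set of all vectors obtained by permuting the coordinates of y. -/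
open Matrix

/-!
Every permuted copy of `y` is majorized by `y`, and majorization by `y` is a convex condition:
by the rearrangement inequality the sum of the `l` largest entries dominates the sum of any `l`
entries, so it is a maximum of linear functionals and hence convex.

Conversely, let `x ≺ y` and let `v ↦ ∑ cᵢ vᵢ` be a linear functional. Permuting coordinates so
that `c` is decreasing, summation by parts turns the prefix-sum inequalities of majorization into
`∑ cᵢ xᵢ ≤ ∑ cᵢ y_{σ i}` for a suitable permutation `σ`. Since the convex hull of finitely many
points is closed, Hahn–Banach separation puts `x` in it.
-/

open Finset

theorem mem_convexHull_of_forall_exists_le {E : Type*} [TopologicalSpace E] [AddCommGroup E]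
    [Module ℝ E] [IsTopologicalAddGroup E] [ContinuousSMul ℝ E] [LocallyConvexSpace ℝ E]
    [T2Space E] {s : Set E} (hs : s.Finite) {x : E}
    (h : ∀ f : StrongDual ℝ E, ∃ a ∈ s, f x ≤ f a) : x ∈ convexHull ℝ s := by
  by_contra hx
  obtain ⟨f, u, hfs, hfx⟩ := geometric_hahn_banach_closed_point (convex_convexHull ℝ s)
    (hs.isCompact_convexHull ℝ).isClosed hx
  obtain ⟨a, ha, hxa⟩ := h f
  exact (hxa.trans_lt (hfs a (subset_convexHull ℝ s ha))).not_gt hfx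

theorem sum_range_mul_nonneg_of_antitoneOn {n : ℕ} {c d : ℕ → ℝ}
    (hc : AntitoneOn c (Set.Iio n)) (hd : ∀ l < n, 0 ≤ ∑ i ∈ range l, d i)
    (hdn : ∑ i ∈ range n, d i = 0) : 0 ≤ ∑ i ∈ range n, c i * d i := by
  have hparts := sum_range_by_parts c d n
  simp only [smul_eq_mul] at hparts
  rw [hparts, hdn, mul_zero, zero_sub, neg_nonneg]
  refine sum_nonpos fun i hi => ?_
  have hi : i + 1 < n := by rw [mem_range] at hi; omega
  exact mul_nonpos_of_nonpos_of_nonneg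
    (sub_nonpos.2 (hc (Set.mem_Iio.2 (by omega)) (Set.mem_Iio.2 hi) i.le_succ)) (hd _ hi)

section Majorization

variable {k : ℕ}

def prefixSum (l : ℕ) (x : Fin k → ℝ) : ℝ :=
  ∑ i ∈ univ.filter (fun i : Fin k => (i : ℕ) < l), x i

theorem prefixSum_eq_sum_range (x : Fin k → ℝ) {l : ℕ} (hl : l ≤ k) :
    prefixSum l x = ∑ n ∈ range l, Function.extend Fin.val x 0 n := by
  calc prefixSum l x
      = ∑ n ∈ range k, if n < l then Function.extend Fin.val x 0 n else 0 := by
        rw [prefixSum, sum_filter, ← Fin.sum_univ_eq_sum_range]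
        simp only [Fin.val_injective.extend_apply]
    _ = ∑ n ∈ range l, Function.extend Fin.val x 0 n := by
        rw [← sum_filter]
        congr 1
        ext n
        simp only [mem_filter, mem_range]
        omega

theorem prefixSum_self (x : Fin k → ℝ) : prefixSum k x = ∑ i, x i := by
  rw [prefixSum, filter_true_of_mem fun i _ => i.isLt]

theorem prefixSum_sub (l : ℕ) (x y : Fin k → ℝ) :
    prefixSum l (x - y) = prefixSum l x - prefixSum l y :=
  sum_sub_distrib ..

theorem sum_mul_le_sum_mul_of_prefixSum_le {c a b : Fin k → ℝ} (hc : Antitone c)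
    (hpre : ∀ l ≤ k, prefixSum l a ≤ prefixSum l b) (htot : ∑ i, a i = ∑ i, b i) :
    ∑ i, c i * a i ≤ ∑ i, c i * b i := by
  -- extend to `ℕ`-indexed sequences to apply summation by parts
  set C := Function.extend Fin.val c 0
  set D := Function.extend Fin.val (b - a) 0
  have hdiff : ∑ i, c i * b i - ∑ i, c i * a i = ∑ n ∈ range k, C n * D n := by
    rw [← sum_sub_distrib, ← Fin.sum_univ_eq_sum_range (fun n => C n * D n)]
    simp only [C, D, Fin.val_injective.extend_apply, Pi.sub_apply, mul_sub]
  have hD : ∀ l ≤ k, ∑ n ∈ range l, D n = prefixSum l b - prefixSum l a := fun l hl => by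
    rw [← prefixSum_eq_sum_range _ hl, prefixSum_sub]
  have hC : AntitoneOn C (Set.Iio k) := fun i hi j hj hij => by
    simp only [C, Set.mem_Iio] at hi hj ⊢
    rw [Fin.val_injective.extend_apply c 0 ⟨i, hi⟩, Fin.val_injective.extend_apply c 0 ⟨j, hj⟩]
    exact hc (Fin.mk_le_mk.2 hij)
  have hnonneg := sum_range_mul_nonneg_of_antitoneOn hC
    (fun l hl => by rw [hD l hl.le]; exact sub_nonneg.2 (hpre l hl.le))
    (by rw [hD k le_rfl, prefixSum_self, prefixSum_self, htot, sub_self])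
  linarith

noncomputable def sortDescPerm (x : Fin k → ℝ) : Equiv.Perm (Fin k) :=
  Fin.revPerm.trans (Tuple.sort x)

theorem sortDesc_eq_comp (x : Fin k → ℝ) : sortDesc x = x ∘ sortDescPerm x := rfl

theorem antitone_sortDesc (x : Fin k → ℝ) : Antitone (sortDesc x) :=
  fun _ _ hij => Tuple.monotone_sort x (Fin.rev_le_rev.2 hij)

theorem prefixSum_comp_perm_le_prefixSum_sortDesc (x : Fin k → ℝ) (σ : Equiv.Perm (Fin k))
    (l : ℕ) : prefixSum l (x ∘ σ) ≤ prefixSum l (sortDesc x) := by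
  have hind : Antitone fun i : Fin k => if (i : ℕ) < l then (1 : ℝ) else 0 := by
    intro i j hij
    have : (i : ℕ) ≤ j := hij
    dsimp only
    split_ifs <;> first | omega | norm_num
  have hx : ∀ i, x (σ i) = sortDesc x ((σ.trans (sortDescPerm x).symm) i) := fun i => by
    simp [sortDesc_eq_comp]
  have := (hind.monovary (antitone_sortDesc x)).sum_mul_comp_perm_le_sum_mul
    (σ := σ.trans (sortDescPerm x).symm)
  simpa only [prefixSum, sum_filter, Function.comp_apply, ite_mul, one_mul, zero_mul, ← hx]
    using this

theorem isMajorizedBy_comp_perm (y : Fin k → ℝ) (σ : Equiv.Perm (Fin k)) :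
    IsMajorizedBy (y ∘ σ) y :=
  ⟨fun l _ => prefixSum_comp_perm_le_prefixSum_sortDesc y ((sortDescPerm (y ∘ σ)).trans σ) l,
    Equiv.sum_comp σ y⟩

theorem convexOn_prefixSum_sortDesc (l : ℕ) :
    ConvexOn ℝ Set.univ fun x : Fin k → ℝ => prefixSum l (sortDesc x) := by
  refine ⟨convex_univ, fun u _ v _ a b ha hb _ => ?_⟩
  set π := sortDescPerm (a • u + b • v)
  calc prefixSum l (sortDesc (a • u + b • v))
      = a * prefixSum l (u ∘ π) + b * prefixSum l (v ∘ π) := by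
        simp only [prefixSum, sortDesc_eq_comp, Function.comp_apply, Pi.add_apply, Pi.smul_apply,
          smul_eq_mul, sum_add_distrib, mul_sum, π]
    _ ≤ _ := add_le_add
        (mul_le_mul_of_nonneg_left (prefixSum_comp_perm_le_prefixSum_sortDesc u π l) ha)
        (mul_le_mul_of_nonneg_left (prefixSum_comp_perm_le_prefixSum_sortDesc v π l) hb)

theorem convex_setOf_isMajorizedBy (y : Fin k → ℝ) : Convex ℝ {x | IsMajorizedBy x y} := by
  intro u hu v hv a b ha hb hab
  refine ⟨fun l hl => ?_, ?_⟩
  · calc prefixSum l (sortDesc (a • u + b • v))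
        ≤ a • prefixSum l (sortDesc u) + b • prefixSum l (sortDesc v) :=
          (convexOn_prefixSum_sortDesc l).2 trivial trivial ha hb hab
      _ ≤ a • prefixSum l (sortDesc y) + b • prefixSum l (sortDesc y) :=
          add_le_add (smul_le_smul_of_nonneg_left (hu.1 l hl) ha)
            (smul_le_smul_of_nonneg_left (hv.1 l hl) hb)
      _ = prefixSum l (sortDesc y) := by rw [← add_smul, hab, one_smul]
  · simp only [Pi.add_apply, Pi.smul_apply, smul_eq_mul, sum_add_distrib, ← mul_sum, hu.2, hv.2,
      ← add_mul, hab, one_mul]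

theorem IsMajorizedBy.exists_perm_sum_mul_le {x y : Fin k → ℝ} (h : IsMajorizedBy x y)
    (c : Fin k → ℝ) : ∃ σ : Equiv.Perm (Fin k), ∑ i, c i * x i ≤ ∑ i, c i * y (σ i) := by
  set π := sortDescPerm c
  refine ⟨π.symm.trans (sortDescPerm y), ?_⟩
  calc ∑ i, c i * x i = ∑ i, sortDesc c i * (x ∘ π) i := (Equiv.sum_comp π _).symm
    _ ≤ ∑ i, sortDesc c i * sortDesc y i :=
        sum_mul_le_sum_mul_of_prefixSum_le (antitone_sortDesc c)
          (fun l hl => (prefixSum_comp_perm_le_prefixSum_sortDesc x π l).trans (h.1 l hl))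
          (by rw [Function.comp_def, Equiv.sum_comp π x, h.2, sortDesc_eq_comp, Function.comp_def,
            Equiv.sum_comp])
    _ = ∑ i, c i * y ((π.symm.trans (sortDescPerm y)) i) := by
        symm
        rw [← Equiv.sum_comp π]
        simp [sortDesc_eq_comp, π]

theorem IsMajorizedBy.mem_convexHull {x y : Fin k → ℝ} (h : IsMajorizedBy x y) :
    x ∈ convexHull ℝ {v : Fin k → ℝ | ∃ σ : Equiv.Perm (Fin k), v = y ∘ σ} := by
  refine mem_convexHull_of_forall_exists_le
    ((Set.finite_range fun σ : Equiv.Perm (Fin k) => y ∘ σ).subset ?_) fun f => ?_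
  · rintro _ ⟨σ, rfl⟩
    exact ⟨σ, rfl⟩
  set c : Fin k → ℝ := fun i => f fun j => if i = j then 1 else 0
  have hf : ∀ v, f v = ∑ i, c i * v i := fun v => by
    rw [← f.coe_coe, LinearMap.pi_apply_eq_sum_univ]
    simp only [smul_eq_mul, mul_comm, ContinuousLinearMap.coe_coe, c]
  obtain ⟨σ, hσ⟩ := h.exists_perm_sum_mul_le c
  exact ⟨y ∘ σ, ⟨σ, rfl⟩, by simpa only [hf, Function.comp_apply] using hσ⟩

end Majorization

/-- Rado's theorem: `x ≺ y` iff `x` lies in the convex hull of the permuted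
versions of `y`. -/
theorem stmt13 {k : ℕ} (x y : Fin k → ℝ) :
    IsMajorizedBy x y ↔
      x ∈ convexHull ℝ {v : Fin k → ℝ | ∃ σ : Equiv.Perm (Fin k), v = y ∘ σ} := by
  refine ⟨IsMajorizedBy.mem_convexHull, fun hx => ?_⟩
  refine convexHull_min ?_ (convex_setOf_isMajorizedBy y) hx
  rintro _ ⟨σ, rfl⟩
  exact isMajorizedBy_comp_perm y σ
end

section
/- For Hermitian matrices A and B, spec(A) ≺ spec(B) holds if and only if A can be written as a finite convex combination A = Σᵢ qᵢ Uᵢ⁻¹ B Uᵢ with unitary matrices Uᵢ, qᵢ ≥ 0, Σᵢ qᵢ = 1 (Uhlmann's theorem). -/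
open Matrix

namespace Uhlmann

open Finset


noncomputable def descPerm {k : ℕ} (x : Fin k → ℝ) : Equiv.Perm (Fin k) :=
  Fin.revPerm.trans (Tuple.sort x)

lemma sortDesc_eq_comp {k : ℕ} (x : Fin k → ℝ) :
    sortDesc x = x ∘ (descPerm x) := rfl

lemma sortDesc_antitone {k : ℕ} (x : Fin k → ℝ) : Antitone (sortDesc x) := by
  intro i j hij
  exact Tuple.monotone_sort x (by simpa using Fin.rev_le_rev.mpr hij)

lemma sum_sortDesc {k : ℕ} (x : Fin k → ℝ) : ∑ i, sortDesc x i = ∑ i, x i := by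
  rw [sortDesc_eq_comp]
  exact Equiv.sum_comp _ x

noncomputable def topSum {k : ℕ} (l : ℕ) (x : Fin k → ℝ) : ℝ :=
  ∑ i ∈ Finset.univ.filter (fun i : Fin k => (i : ℕ) < l), sortDesc x i

lemma isMajorizedBy_iff {k : ℕ} (x y : Fin k → ℝ) :
    IsMajorizedBy x y ↔ (∀ l : ℕ, l ≤ k → topSum l x ≤ topSum l y) ∧ ∑ i, x i = ∑ i, y i :=
  Iff.rfl

lemma strictMono_nat_le {l k : ℕ} (f : Fin l → Fin k) (hf : StrictMono f) :
    ∀ i : Fin l, (i : ℕ) ≤ (f i : ℕ) := by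
  intro ⟨n, hn⟩
  induction n with
  | zero => simp
  | succ n ih =>
    have h1 : (f ⟨n, Nat.lt_of_succ_lt hn⟩ : ℕ) < (f ⟨n+1, hn⟩ : ℕ) := by
      exact hf (by simp [Fin.lt_def])
    have h2 := ih (Nat.lt_of_succ_lt hn)
    simp only [Fin.val_mk] at h2 ⊢
    omega

lemma sum_filter_lt_eq {k l : ℕ} (hl : l ≤ k) (y : Fin k → ℝ) :
    ∑ i ∈ Finset.univ.filter (fun i : Fin k => (i : ℕ) < l), y i
      = ∑ i : Fin l, y (Fin.castLE hl i) := by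
  refine Finset.sum_bij' (fun (a : Fin k) (ha : a ∈ _) => (⟨(a : ℕ), by
      have := (Finset.mem_filter.mp ha).2; exact this⟩ : Fin l))
    (fun (b : Fin l) _ => Fin.castLE hl b) ?_ ?_ ?_ ?_ ?_
  · intro a ha; simp
  · intro b hb; simp only [Finset.mem_filter, Finset.mem_univ, true_and]; exact b.2
  · intro a ha; rfl
  · intro b hb; rfl
  · intro a ha; rfl

lemma sum_le_of_antitone {k l : ℕ} (hl : l ≤ k) (y : Fin k → ℝ) (hy : Antitone y)
    (T : Finset (Fin k)) (hT : T.card = l) :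
    ∑ j ∈ T, y j ≤ ∑ i ∈ Finset.univ.filter (fun i : Fin k => (i : ℕ) < l), y i := by
  have hfin : ∑ j ∈ T, y j = ∑ i : Fin l, y (T.orderIsoOfFin hT i) := by
    rw [← Finset.sum_coe_sort T y]
    exact (Fintype.sum_equiv (T.orderIsoOfFin hT).toEquiv _ _ (fun i => rfl)).symm
  rw [hfin, sum_filter_lt_eq hl]
  refine Finset.sum_le_sum fun i _ => hy ?_
  have hsm : StrictMono (fun i : Fin l => ((T.orderIsoOfFin hT i) : Fin k)) := by
    intro a b hab
    exact_mod_cast (T.orderIsoOfFin hT).strictMono hab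
  have := strictMono_nat_le _ hsm i
  simpa [Fin.le_def] using this

lemma card_filter_lt {k l : ℕ} (hl : l ≤ k) :
    (Finset.univ.filter (fun i : Fin k => (i : ℕ) < l)).card = l := by
  rw [Finset.card_filter]
  rw [Fin.sum_univ_eq_sum_range (fun i => if i < l then 1 else 0) k]
  have : ∀ i ∈ Finset.range k, (if i < l then 1 else 0) = if i ∈ Finset.range l then 1 else 0 := by
    intro i _; simp
  rw [Finset.sum_congr rfl this, Finset.sum_ite_mem, Finset.inter_eq_right.mpr
    (Finset.range_subset_range.mpr hl)]
  simp

lemma exists_topSum {k : ℕ} (l : ℕ) (hl : l ≤ k) (x : Fin k → ℝ) :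
    ∃ T : Finset (Fin k), T.card = l ∧ ∑ j ∈ T, x j = topSum l x := by
  refine ⟨(Finset.univ.filter (fun i : Fin k => (i : ℕ) < l)).image (descPerm x), ?_, ?_⟩
  · rw [Finset.card_image_of_injective _ (descPerm x).injective, card_filter_lt hl]
  · rw [Finset.sum_image (fun a _ b _ h => (descPerm x).injective h)]
    rfl

lemma sum_le_topSum {k : ℕ} (l : ℕ) (hl : l ≤ k) (x : Fin k → ℝ)
    (T : Finset (Fin k)) (hT : T.card = l) :
    ∑ j ∈ T, x j ≤ topSum l x := by
  have : ∑ j ∈ T, x j = ∑ j ∈ T.image (descPerm x).symm, sortDesc x j := by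
    rw [Finset.sum_image (fun a _ b _ h => (descPerm x).symm.injective h)]
    refine Finset.sum_congr rfl fun j _ => ?_
    rw [sortDesc_eq_comp]; simp
  rw [this]
  exact sum_le_of_antitone hl _ (sortDesc_antitone x) _
    (by rw [Finset.card_image_of_injective _ (descPerm x).symm.injective, hT])

lemma topSum_comp {k : ℕ} (l : ℕ) (hl : l ≤ k) (x : Fin k → ℝ) (e : Equiv.Perm (Fin k)) :
    topSum l (x ∘ e) = topSum l x := by
  have h1 : ∀ (y : Fin k → ℝ) (e : Equiv.Perm (Fin k)), topSum l (y ∘ e) ≤ topSum l y := by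
    intro y e
    obtain ⟨T, hTc, hTs⟩ := exists_topSum l hl (y ∘ e)
    rw [← hTs]
    have : ∑ j ∈ T, (y ∘ e) j = ∑ j ∈ T.image e, y j := by
      rw [Finset.sum_image (fun a _ b _ h => e.injective h)]; rfl
    rw [this]
    exact sum_le_topSum l hl y _ (by rw [Finset.card_image_of_injective _ e.injective, hTc])
  refine le_antisymm (h1 x e) ?_
  have := h1 (x ∘ e) e.symm
  have he : (x ∘ e) ∘ e.symm = x := by ext i; simp
  rwa [he] at this

lemma isMajorizedBy_comp {k : ℕ} (x y : Fin k → ℝ) (e e' : Equiv.Perm (Fin k)) :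
    IsMajorizedBy (x ∘ e) (y ∘ e') ↔ IsMajorizedBy x y := by
  rw [isMajorizedBy_iff, isMajorizedBy_iff]
  constructor
  · rintro ⟨h1, h2⟩
    refine ⟨fun l hl => ?_, ?_⟩
    · have := h1 l hl
      rwa [topSum_comp l hl x e, topSum_comp l hl y e'] at this
    · simp only [Function.comp_apply] at h2
      rwa [Equiv.sum_comp e x, Equiv.sum_comp e' y] at h2
  · rintro ⟨h1, h2⟩
    refine ⟨fun l hl => ?_, ?_⟩
    · rw [topSum_comp l hl x e, topSum_comp l hl y e']
      exact h1 l hl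
    · simp only [Function.comp_apply]
      rw [Equiv.sum_comp e x, Equiv.sum_comp e' y]
      exact h2

/-! ### Rearrangement and Abel pieces -/

lemma monovary_sortDesc {k : ℕ} (c a : Fin k → ℝ) :
    Monovary (sortDesc c) (sortDesc a) := by
  intro i j hij
  rcases le_or_gt j i with h | h
  · exact sortDesc_antitone c h
  · exact absurd hij (not_lt.mpr (sortDesc_antitone a h.le))

lemma rearrange_le {k : ℕ} (c a : Fin k → ℝ) :
    ∑ i, c i * a i ≤ ∑ i, sortDesc c i * sortDesc a i := by
  have h1 : ∑ i, c i * a i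
      = ∑ j, sortDesc c j * sortDesc a ((descPerm a).symm ((descPerm c) j)) := by
    rw [← Equiv.sum_comp (descPerm c) (fun i => c i * a i)]
    refine Finset.sum_congr rfl fun j _ => ?_
    rw [sortDesc_eq_comp, sortDesc_eq_comp]
    simp
  rw [h1]
  exact (monovary_sortDesc c a).sum_mul_comp_perm_le_sum_mul
    (σ := ((descPerm c).trans (descPerm a).symm))

lemma topSum_zero {k : ℕ} (x : Fin k → ℝ) : topSum 0 x = 0 := by
  simp [topSum]

lemma topSum_of_ge {k l : ℕ} (hl : k ≤ l) (x : Fin k → ℝ) : topSum l x = ∑ i, x i := by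
  rw [topSum, ← sum_sortDesc]
  refine Finset.sum_congr ?_ fun _ _ => rfl
  ext i; simpa using lt_of_lt_of_le i.2 hl

lemma topSum_succ {k l : ℕ} (hl : l < k) (x : Fin k → ℝ) :
    topSum (l + 1) x = topSum l x + sortDesc x ⟨l, hl⟩ := by
  rw [topSum, topSum]
  have hset : Finset.univ.filter (fun i : Fin k => (i : ℕ) < l + 1)
      = insert ⟨l, hl⟩ (Finset.univ.filter (fun i : Fin k => (i : ℕ) < l)) := by
    ext i
    simp only [Finset.mem_filter, Finset.mem_univ, true_and, Finset.mem_insert, Fin.ext_iff]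
    omega
  rw [hset, Finset.sum_insert (by simp)]
  ring

lemma abel_nonneg (γ d : ℕ → ℝ) (k : ℕ) (hγ : ∀ l m, l ≤ m → m < k → γ m ≤ γ l)
    (hd : ∀ l, 0 ≤ d l) (hd0 : d 0 = 0) (hdk : d k = 0) :
    0 ≤ ∑ l ∈ Finset.range k, γ l * (d (l + 1) - d l) := by
  have key : ∑ l ∈ Finset.range k, γ l * d (l + 1) = ∑ l ∈ Finset.range k, γ (l - 1) * d l := by
    rcases Nat.eq_zero_or_pos k with rfl | hk
    · simp
    obtain ⟨k', rfl⟩ : ∃ k', k = k' + 1 := ⟨k - 1, by omega⟩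
    rw [Finset.sum_range_succ, Finset.sum_range_succ']
    simp [hd0, hdk]
  have expand : ∑ l ∈ Finset.range k, γ l * (d (l + 1) - d l)
      = ∑ l ∈ Finset.range k, (γ (l - 1) - γ l) * d l := by
    rw [Finset.sum_congr rfl (fun l _ => by ring :
      ∀ l ∈ Finset.range k, γ l * (d (l+1) - d l) = γ l * d (l+1) - γ l * d l)]
    rw [Finset.sum_sub_distrib, key, ← Finset.sum_sub_distrib]
    exact Finset.sum_congr rfl fun l _ => by ring
  rw [expand]
  refine Finset.sum_nonneg fun l hl => mul_nonneg (sub_nonneg.mpr ?_) (hd l)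
  exact hγ (l - 1) l (Nat.sub_le l 1) (Finset.mem_range.mp hl)

lemma abel_compare {k : ℕ} (c a b : Fin k → ℝ)
    (hp : ∀ l : ℕ, l ≤ k → topSum l a ≤ topSum l b) (hs : ∑ i, a i = ∑ i, b i) :
    ∑ i, sortDesc c i * sortDesc a i ≤ ∑ i, sortDesc c i * sortDesc b i := by
  set γ : ℕ → ℝ := fun l => if h : l < k then sortDesc c ⟨l, h⟩ else 0 with hγdef
  set d : ℕ → ℝ := fun l => topSum l b - topSum l a with hddef
  have hfin : ∀ x : Fin k → ℝ, ∑ i, sortDesc c i * sortDesc x i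
      = ∑ l ∈ Finset.range k, γ l * (topSum (l+1) x - topSum l x) := by
    intro x
    rw [← Fin.sum_univ_eq_sum_range (fun l => γ l * (topSum (l+1) x - topSum l x)) k]
    refine Finset.sum_congr rfl fun i _ => ?_
    rw [topSum_succ i.2, hγdef]
    simp [i.2]
  rw [hfin a, hfin b]
  have hsum : ∑ l ∈ Finset.range k, γ l * (topSum (l+1) b - topSum l b)
      - ∑ l ∈ Finset.range k, γ l * (topSum (l+1) a - topSum l a)
      = ∑ l ∈ Finset.range k, γ l * (d (l+1) - d l) := by
    rw [← Finset.sum_sub_distrib]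
    exact Finset.sum_congr rfl fun l _ => by simp [hddef]; ring
  have h0 : 0 ≤ ∑ l ∈ Finset.range k, γ l * (d (l+1) - d l) := by
    refine abel_nonneg γ d k ?_ ?_ ?_ ?_
    · intro l m hlm hm
      simp only [hγdef]
      rw [dif_pos hm, dif_pos (lt_of_le_of_lt hlm hm)]
      exact sortDesc_antitone c (by simpa [Fin.le_def] using hlm)
    · intro l
      rcases le_or_gt l k with h | h
      · exact sub_nonneg.mpr (hp l h)
      · simp [hddef, topSum_of_ge h.le, hs]
    · simp [hddef, topSum_zero]
    · simp [hddef, topSum_of_ge le_rfl, hs]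
  linarith

/-- D3: key inequality against linear functionals. -/
lemma key_ineq {k : ℕ} (a b : Fin k → ℝ) (h : IsMajorizedBy a b) (c : Fin k → ℝ) :
    ∃ σ : Equiv.Perm (Fin k), ∑ i, c i * a i ≤ ∑ i, c i * b (σ i) := by
  obtain ⟨hp, hs⟩ := (isMajorizedBy_iff a b).mp h
  refine ⟨(descPerm c).symm.trans (descPerm b), ?_⟩
  have h3 : ∑ i, sortDesc c i * sortDesc b i
      = ∑ j, c j * b ((descPerm b) ((descPerm c).symm j)) := by
    rw [← Equiv.sum_comp (descPerm c)
      (fun j => c j * b ((descPerm b) ((descPerm c).symm j)))]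
    refine Finset.sum_congr rfl fun i _ => ?_
    rw [sortDesc_eq_comp, sortDesc_eq_comp]
    simp
  calc ∑ i, c i * a i ≤ ∑ i, sortDesc c i * sortDesc a i := rearrange_le c a
    _ ≤ ∑ i, sortDesc c i * sortDesc b i := abel_compare c a b hp hs
    _ = _ := h3

/-! ### Convexity part -/

lemma convexHull_subset_combos {k : ℕ} (b : Fin k → ℝ) :
    convexHull ℝ (Set.range (fun σ : Equiv.Perm (Fin k) => b ∘ σ)) ⊆
      {x | ∃ w : Equiv.Perm (Fin k) → ℝ, (∀ σ, 0 ≤ w σ) ∧ ∑ σ, w σ = 1 ∧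
        x = ∑ σ, w σ • (b ∘ σ)} := by
  refine convexHull_min ?_ ?_
  · rintro x ⟨σ, rfl⟩
    refine ⟨fun τ => if τ = σ then 1 else 0, fun τ => by positivity, by simp, ?_⟩
    simp [ite_smul]
  · rintro x ⟨w, hw0, hw1, rfl⟩ y ⟨v, hv0, hv1, rfl⟩ s t hs ht hst
    refine ⟨fun σ => s * w σ + t * v σ,
      fun σ => by have := hw0 σ; have := hv0 σ; positivity, ?_, ?_⟩
    · rw [Finset.sum_add_distrib, ← Finset.mul_sum, ← Finset.mul_sum, hw1, hv1]
      simpa using hst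
    · rw [Finset.smul_sum, Finset.smul_sum, ← Finset.sum_add_distrib]
      refine Finset.sum_congr rfl fun σ _ => ?_
      rw [smul_smul, smul_smul, add_smul]

lemma mem_convexHull_of_maj {k : ℕ} (a b : Fin k → ℝ) (h : IsMajorizedBy a b) :
    a ∈ convexHull ℝ (Set.range (fun σ : Equiv.Perm (Fin k) => b ∘ σ)) := by
  by_contra hmem
  obtain ⟨g, u, hgu, hua⟩ := geometric_hahn_banach_closed_point
    (convex_convexHull ℝ _) ((Set.finite_range _).isClosed_convexHull (𝕜 := ℝ)) hmem
  set c : Fin k → ℝ := fun i => g (fun j => if i = j then (1 : ℝ) else 0) with hc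
  have hg : ∀ y : Fin k → ℝ, g y = ∑ i, c i * y i := by
    intro y
    conv_lhs => rw [pi_eq_sum_univ y]
    rw [map_sum]
    refine Finset.sum_congr rfl fun i _ => ?_
    rw [_root_.map_smul]
    simp [hc, mul_comm]
  obtain ⟨σ, hσ⟩ := key_ineq a b h c
  have h1 : g (b ∘ σ) < u := hgu _ (subset_convexHull ℝ _ ⟨σ, rfl⟩)
  have h2 : g a ≤ g (b ∘ σ) := by
    rw [hg, hg]
    exact hσ
  linarith

/-- The vector-level Uhlmann/HLP/Rado theorem. -/
theorem vec_uhlmann {k : ℕ} (a b : Fin k → ℝ) :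
    IsMajorizedBy a b ↔ ∃ w : Equiv.Perm (Fin k) → ℝ, (∀ σ, 0 ≤ w σ) ∧ ∑ σ, w σ = 1 ∧
      a = ∑ σ, w σ • (b ∘ σ) := by
  constructor
  · intro h
    exact convexHull_subset_combos b (mem_convexHull_of_maj a b h)
  · rintro ⟨w, hw0, hw1, rfl⟩
    rw [isMajorizedBy_iff]
    have happ : ∀ j, (∑ σ : Equiv.Perm (Fin k), w σ • (b ∘ σ)) j = ∑ σ, w σ * b (σ j) := by
      intro j
      rw [Finset.sum_apply]
      rfl
    constructor
    · intro l hl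
      obtain ⟨T, hTc, hTs⟩ := exists_topSum l hl (∑ σ, w σ • (b ∘ σ))
      rw [← hTs]
      calc ∑ j ∈ T, (∑ σ : Equiv.Perm (Fin k), w σ • (b ∘ σ)) j
          = ∑ σ : Equiv.Perm (Fin k), w σ * ∑ j ∈ T, b (σ j) := by
            rw [Finset.sum_congr rfl fun j _ => happ j, Finset.sum_comm]
            exact Finset.sum_congr rfl fun σ _ => by rw [Finset.mul_sum]
        _ ≤ ∑ σ : Equiv.Perm (Fin k), w σ * topSum l b := by
            refine Finset.sum_le_sum fun σ _ => mul_le_mul_of_nonneg_left ?_ (hw0 σ)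
            have : ∑ j ∈ T, b (σ j) = ∑ j ∈ T.image σ, b j := by
              rw [Finset.sum_image fun x _ y _ h => σ.injective h]
            rw [this]
            exact sum_le_topSum l hl b _
              (by rw [Finset.card_image_of_injective _ σ.injective, hTc])
        _ = topSum l b := by rw [← Finset.sum_mul, hw1, one_mul]
    · calc ∑ j, (∑ σ : Equiv.Perm (Fin k), w σ • (b ∘ σ)) j
          = ∑ σ : Equiv.Perm (Fin k), w σ * ∑ j, b (σ j) := by
            rw [Finset.sum_congr rfl fun j _ => happ j, Finset.sum_comm]
            exact Finset.sum_congr rfl fun σ _ => by rw [Finset.mul_sum]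
        _ = ∑ j, b j := by
            rw [Finset.sum_congr rfl fun σ _ => by rw [Equiv.sum_comp σ b], ← Finset.sum_mul,
              hw1, one_mul]


section MatrixLayer

variable {k : ℕ}


lemma permMatrix_apply' {R : Type*} [Semiring R] [DecidableEq R]
    (σ : Equiv.Perm (Fin k)) (i j : Fin k) :
    σ.permMatrix R i j = if σ i = j then 1 else 0 := by
  simp [Equiv.Perm.permMatrix, PEquiv.toMatrix_apply, Equiv.toPEquiv_apply]

lemma permMatrix_mem_unitary (σ : Equiv.Perm (Fin k)) :
    σ.permMatrix ℂ ∈ Matrix.unitaryGroup (Fin k) ℂ := by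
  rw [Matrix.mem_unitaryGroup_iff]
  ext i j
  simp only [Matrix.mul_apply, Matrix.star_apply, permMatrix_apply', Matrix.one_apply,
    apply_ite (star : ℂ → ℂ), star_one, star_zero, ite_mul, one_mul, zero_mul, mul_ite,
    mul_one, mul_zero]
  rw [Finset.sum_ite_eq Finset.univ (σ j) (fun s => if σ i = s then (1:ℂ) else 0)]
  simp only [Finset.mem_univ, if_true]
  by_cases h : i = j <;> simp [h, σ.injective.eq_iff]

lemma permMatrix_conj_diagonal (σ : Equiv.Perm (Fin k)) (d : Fin k → ℂ) :
    σ.permMatrix ℂ * diagonal d * star (σ.permMatrix ℂ) = diagonal (fun i => d (σ i)) := by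
  ext i j
  rw [Matrix.mul_apply]
  simp only [Matrix.mul_diagonal, Matrix.star_apply, permMatrix_apply',
    apply_ite (star : ℂ → ℂ), star_one, star_zero, ite_mul, one_mul, zero_mul, mul_ite,
    mul_one, mul_zero, Matrix.diagonal_apply]
  rw [Finset.sum_ite_eq Finset.univ (σ j) (fun s => if σ i = s then d s else 0)]
  simp only [Finset.mem_univ, if_true, Matrix.diagonal_apply]
  by_cases h : i = j <;> simp [h, σ.injective.eq_iff]


lemma conj_diag_entry (X : Matrix (Fin k) (Fin k) ℂ) (d : Fin k → ℂ) (j : Fin k) :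
    (star X * diagonal d * X) j j = ∑ t, star (X t j) * d t * X t j := by
  rw [Matrix.mul_apply]
  refine Finset.sum_congr rfl fun t _ => ?_
  rw [Matrix.mul_diagonal, Matrix.star_apply]

lemma col_normSq (X : Matrix (Fin k) (Fin k) ℂ) (hX : X ∈ Matrix.unitaryGroup (Fin k) ℂ)
    (j : Fin k) : ∑ t, Complex.normSq (X t j) = 1 := by
  have h := Matrix.mem_unitaryGroup_iff'.mp hX
  have h2 : (star X * X) j j = 1 := by rw [h]; simp
  rw [Matrix.mul_apply] at h2
  have h3 : ∀ t, (star X) j t * X t j = (Complex.normSq (X t j) : ℂ) := by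
    intro t
    rw [Matrix.star_apply, Complex.star_def, Complex.normSq_eq_conj_mul_self]
  rw [Finset.sum_congr rfl fun t _ => h3 t] at h2
  exact_mod_cast h2

lemma row_normSq (X : Matrix (Fin k) (Fin k) ℂ) (hX : X ∈ Matrix.unitaryGroup (Fin k) ℂ)
    (t : Fin k) : ∑ j, Complex.normSq (X t j) = 1 := by
  have h := Matrix.mem_unitaryGroup_iff.mp hX
  have h2 : (X * star X) t t = 1 := by rw [h]; simp
  rw [Matrix.mul_apply] at h2
  have h3 : ∀ j, X t j * (star X) j t = (Complex.normSq (X t j) : ℂ) := by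
    intro j
    rw [Matrix.star_apply, Complex.star_def, Complex.mul_conj]
  rw [Finset.sum_congr rfl fun j _ => h3 j] at h2
  exact_mod_cast h2

lemma unitary_inv_eq_star {U : Matrix (Fin k) (Fin k) ℂ}
    (h : U ∈ Matrix.unitaryGroup (Fin k) ℂ) : U⁻¹ = star U :=
  Matrix.inv_eq_left_inv (Matrix.mem_unitaryGroup_iff'.mp h)

lemma eigen_comb_of_matrix_comb {A B : Matrix (Fin k) (Fin k) ℂ}
    (hA : A.IsHermitian) (hB : B.IsHermitian) {m : ℕ} (q : Fin m → ℝ)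
    (U : Fin m → Matrix (Fin k) (Fin k) ℂ) (hq0 : ∀ i, 0 ≤ q i) (hq1 : ∑ i, q i = 1)
    (hU : ∀ i, U i ∈ Matrix.unitaryGroup (Fin k) ℂ)
    (hAB : A = ∑ i, q i • ((U i)⁻¹ * B * U i)) :
    ∃ w : Equiv.Perm (Fin k) → ℝ, (∀ σ, 0 ≤ w σ) ∧ ∑ σ, w σ = 1 ∧
      hA.eigenvalues = ∑ σ, w σ • (hB.eigenvalues ∘ σ) := by
  set a := hA.eigenvalues with ha
  set b := hB.eigenvalues with hb
  set V : Matrix (Fin k) (Fin k) ℂ := (hA.eigenvectorUnitary : Matrix (Fin k) (Fin k) ℂ) with hV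
  set W : Matrix (Fin k) (Fin k) ℂ := (hB.eigenvectorUnitary : Matrix (Fin k) (Fin k) ℂ) with hW
  set X : Fin m → Matrix (Fin k) (Fin k) ℂ := fun i => star W * U i * V with hX
  have hXu : ∀ i, X i ∈ Matrix.unitaryGroup (Fin k) ℂ := fun i =>
    mul_mem (mul_mem (Unitary.star_mem hB.eigenvectorUnitary.2) (hU i))
      hA.eigenvectorUnitary.2
  have hBdec : B = W * diagonal (RCLike.ofReal ∘ b) * star W := hB.spectral_theorem
  have hdiag : diagonal (RCLike.ofReal ∘ a) =
      ∑ i, q i • (star (X i) * diagonal (RCLike.ofReal ∘ b) * X i) := by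
    have h1 : star V * A * V = diagonal (RCLike.ofReal ∘ a) :=
      by have := hA.conjStarAlgAut_star_eigenvectorUnitary
         rwa [Unitary.conjStarAlgAut_apply, Unitary.coe_star, star_star] at this
    rw [← h1, hAB, Matrix.mul_sum, Matrix.sum_mul]
    refine Finset.sum_congr rfl fun i _ => ?_
    rw [unitary_inv_eq_star (hU i), hBdec, mul_smul_comm, smul_mul_assoc]
    congr 1
    simp only [hX, StarMul.star_mul, star_star, Matrix.mul_assoc]
  -- the doubly stochastic matrix
  set D : Matrix (Fin k) (Fin k) ℝ :=
    Matrix.of (fun j t => ∑ i, q i * Complex.normSq (X i t j)) with hD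
  have hentry : ∀ j, a j = ∑ t, D j t * b t := by
    intro j
    have h2 : ((a j : ℝ) : ℂ) = ((∑ t, D j t * b t : ℝ) : ℂ) := by
      calc ((a j : ℝ) : ℂ) = diagonal (RCLike.ofReal ∘ a) j j := by simp
        _ = ∑ i, q i • (((star (X i) * diagonal (RCLike.ofReal ∘ b) * X i) :
              Matrix (Fin k) (Fin k) ℂ) j j) := by
            rw [hdiag]
            simp only [Matrix.sum_apply, Matrix.smul_apply]
        _ = ∑ i, ∑ t, (q i : ℂ) * ((Complex.normSq (X i t j) : ℂ) * (b t : ℂ)) := by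
            refine Finset.sum_congr rfl fun i _ => ?_
            rw [conj_diag_entry, Finset.smul_sum]
            refine Finset.sum_congr rfl fun t _ => ?_
            rw [show star (X i t j) * ((RCLike.ofReal ∘ b) t) * X i t j
                = (Complex.normSq (X i t j) : ℂ) * (b t : ℂ) by
              rw [mul_right_comm, Complex.star_def, ← Complex.normSq_eq_conj_mul_self]
              simp only [Function.comp_apply]
              push_cast
              first | rfl | norm_cast | ring]
            rw [Complex.real_smul]
        _ = ∑ t, ∑ i, (q i : ℂ) * ((Complex.normSq (X i t j) : ℂ) * (b t : ℂ)) :=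
            Finset.sum_comm
        _ = ((∑ t, D j t * b t : ℝ) : ℂ) := by
            push_cast [hD, Matrix.of_apply]
            refine Finset.sum_congr rfl fun t _ => ?_
            rw [Finset.sum_mul]
            refine Finset.sum_congr rfl fun i _ => by ring
    exact_mod_cast h2
  have hDds : D ∈ doublyStochastic ℝ (Fin k) := by
    rw [mem_doublyStochastic_iff_sum]
    refine ⟨fun j t => ?_, fun j => ?_, fun t => ?_⟩
    · show (0:ℝ) ≤ ∑ i, q i * Complex.normSq (X i t j)
      exact Finset.sum_nonneg fun i _ => mul_nonneg (hq0 i) (Complex.normSq_nonneg _)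
    · have hswap : ∑ t, D j t = ∑ i, q i * ∑ t, Complex.normSq (X i t j) := by
        simp only [hD, Matrix.of_apply]
        rw [Finset.sum_comm]
        exact Finset.sum_congr rfl fun i _ => (Finset.mul_sum _ _ _).symm
      rw [hswap, Finset.sum_congr rfl fun i _ => by rw [col_normSq (X i) (hXu i) j, mul_one]]
      exact hq1
    · have hswap : ∑ j, D j t = ∑ i, q i * ∑ j, Complex.normSq (X i t j) := by
        simp only [hD, Matrix.of_apply]
        rw [Finset.sum_comm]
        exact Finset.sum_congr rfl fun i _ => (Finset.mul_sum _ _ _).symm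
      rw [hswap, Finset.sum_congr rfl fun i _ => by rw [row_normSq (X i) (hXu i) t, mul_one]]
      exact hq1
  obtain ⟨w, hw0, hw1, hwD⟩ := exists_eq_sum_perm_of_mem_doublyStochastic hDds
  refine ⟨w, hw0, hw1, ?_⟩
  funext j
  rw [Finset.sum_apply]
  have hDjt : ∀ t, D j t = ∑ σ : Equiv.Perm (Fin k), w σ * (if σ j = t then 1 else 0) := by
    intro t
    rw [← hwD, Matrix.sum_apply]
    exact Finset.sum_congr rfl fun σ _ => by
      rw [Matrix.smul_apply, permMatrix_apply', smul_eq_mul]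
  calc a j = ∑ t, D j t * b t := hentry j
    _ = ∑ σ : Equiv.Perm (Fin k), w σ * b (σ j) := by
        rw [Finset.sum_congr rfl fun t _ => by rw [hDjt t, Finset.sum_mul]]
        rw [Finset.sum_comm]
        refine Finset.sum_congr rfl fun σ _ => ?_
        rw [Finset.sum_congr rfl fun t (_ : t ∈ univ) => (mul_assoc (w σ)
          (if σ j = t then (1:ℝ) else 0) (b t))]
        rw [← Finset.mul_sum]
        congr 1
        simp only [ite_mul, one_mul, zero_mul]
        rw [Finset.sum_ite_eq Finset.univ (σ j) (fun t => b t)]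
        simp
    _ = ∑ σ : Equiv.Perm (Fin k), (w σ • (b ∘ σ)) j := by
        exact Finset.sum_congr rfl fun σ _ => rfl

lemma matrix_comb_of_eigen_comb {A B : Matrix (Fin k) (Fin k) ℂ}
    (hA : A.IsHermitian) (hB : B.IsHermitian) (w : Equiv.Perm (Fin k) → ℝ)
    (hw0 : ∀ σ, 0 ≤ w σ) (hw1 : ∑ σ, w σ = 1)
    (hab : hA.eigenvalues = ∑ σ, w σ • (hB.eigenvalues ∘ σ)) :
    ∃ (m : ℕ) (q : Fin m → ℝ) (U : Fin m → Matrix (Fin k) (Fin k) ℂ),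
      (∀ i, 0 ≤ q i) ∧ (∑ i, q i = 1) ∧
      (∀ i, U i ∈ Matrix.unitaryGroup (Fin k) ℂ) ∧
      A = ∑ i, q i • ((U i)⁻¹ * B * U i) := by
  set a := hA.eigenvalues with ha
  set b := hB.eigenvalues with hb
  set V : Matrix (Fin k) (Fin k) ℂ := (hA.eigenvectorUnitary : Matrix (Fin k) (Fin k) ℂ) with hV
  set W : Matrix (Fin k) (Fin k) ℂ := (hB.eigenvectorUnitary : Matrix (Fin k) (Fin k) ℂ) with hW
  set e : Fin (Fintype.card (Equiv.Perm (Fin k))) ≃ Equiv.Perm (Fin k) :=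
    (Fintype.equivFin (Equiv.Perm (Fin k))).symm with he
  set Uf : Equiv.Perm (Fin k) → Matrix (Fin k) (Fin k) ℂ :=
    fun σ => W * star (σ.permMatrix ℂ) * star V with hUf
  have hUfu : ∀ σ, Uf σ ∈ Matrix.unitaryGroup (Fin k) ℂ := fun σ =>
    mul_mem (mul_mem hB.eigenvectorUnitary.2 (Unitary.star_mem (permMatrix_mem_unitary σ)))
      (Unitary.star_mem hA.eigenvectorUnitary.2)
  have hUinv : ∀ σ, (Uf σ)⁻¹ = V * σ.permMatrix ℂ * star W := by
    intro σ
    rw [unitary_inv_eq_star (hUfu σ), hUf]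
    simp only [StarMul.star_mul, star_star, Matrix.mul_assoc]
  have hdiagA : diagonal (RCLike.ofReal ∘ a) =
      ∑ σ : Equiv.Perm (Fin k), w σ • (σ.permMatrix ℂ * diagonal (RCLike.ofReal ∘ b)
        * star (σ.permMatrix ℂ)) := by
    have h1 : ∀ σ : Equiv.Perm (Fin k), σ.permMatrix ℂ * diagonal (RCLike.ofReal ∘ b)
        * star (σ.permMatrix ℂ) = diagonal (fun i => ((b (σ i) : ℝ) : ℂ)) := by
      intro σ
      rw [permMatrix_conj_diagonal]
      rfl
    rw [Finset.sum_congr rfl fun σ _ => by rw [h1 σ]]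
    ext i j
    rw [Matrix.sum_apply]
    by_cases hij : i = j
    · subst hij
      simp only [Matrix.diagonal_apply_eq, Matrix.smul_apply, Function.comp_apply]
      have h2 : a i = ∑ σ : Equiv.Perm (Fin k), w σ * b (σ i) := by
        rw [hab, Finset.sum_apply]
        rfl
      rw [h2]
      push_cast
      refine Finset.sum_congr rfl fun σ _ => ?_
      rw [Complex.real_smul]
      norm_cast
    · simp only [Matrix.diagonal_apply_ne _ hij, Matrix.smul_apply,
        Matrix.diagonal_apply_ne _ hij, smul_zero, Finset.sum_const_zero]
  have hBdiag : diagonal (RCLike.ofReal ∘ b) = star W * B * W :=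
    (show star W * B * W = diagonal (RCLike.ofReal ∘ b) by
      have := hB.conjStarAlgAut_star_eigenvectorUnitary
      rwa [Unitary.conjStarAlgAut_apply, Unitary.coe_star, star_star] at this).symm
  have hkey : A = ∑ σ : Equiv.Perm (Fin k), w σ • ((Uf σ)⁻¹ * B * Uf σ) := by
    calc A = V * diagonal (RCLike.ofReal ∘ a) * star V := hA.spectral_theorem
      _ = ∑ σ : Equiv.Perm (Fin k), w σ • (V * (σ.permMatrix ℂ * diagonal (RCLike.ofReal ∘ b)
            * star (σ.permMatrix ℂ)) * star V) := by
          rw [hdiagA, Matrix.mul_sum, Matrix.sum_mul]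
          refine Finset.sum_congr rfl fun σ _ => ?_
          rw [mul_smul_comm, smul_mul_assoc]
      _ = ∑ σ : Equiv.Perm (Fin k), w σ • ((Uf σ)⁻¹ * B * Uf σ) := by
          refine Finset.sum_congr rfl fun σ _ => ?_
          congr 1
          rw [hBdiag, hUinv σ, hUf]
          simp only [StarMul.star_mul, star_star, Matrix.mul_assoc]
  refine ⟨Fintype.card (Equiv.Perm (Fin k)), fun i => w (e i), fun i => Uf (e i),
    fun i => hw0 (e i), ?_, fun i => hUfu (e i), ?_⟩
  · rw [Equiv.sum_comp e w, hw1]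
  · rw [hkey, ← Equiv.sum_comp e (fun σ => w σ • ((Uf σ)⁻¹ * B * Uf σ))]

end MatrixLayer

end Uhlmann

/-- Uhlmann's theorem: `spec(A) ≺ spec(B)` iff `A` is a finite convex combination of
unitary conjugates of `B`. -/
theorem stmt14 {k : ℕ} (A B : Matrix (Fin k) (Fin k) ℂ)
    (hA : A.IsHermitian) (hB : B.IsHermitian) :
    IsMajorizedBy (specDesc A hA) (specDesc B hB) ↔
      ∃ (m : ℕ) (q : Fin m → ℝ) (U : Fin m → Matrix (Fin k) (Fin k) ℂ),
        (∀ i, 0 ≤ q i) ∧ (∑ i, q i = 1) ∧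
        (∀ i, U i ∈ Matrix.unitaryGroup (Fin k) ℂ) ∧
        A = ∑ i, q i • ((U i)⁻¹ * B * U i) := by
  have key : IsMajorizedBy (specDesc A hA) (specDesc B hB)
      ↔ IsMajorizedBy hA.eigenvalues hB.eigenvalues := by
    have h1 : specDesc A hA = hA.eigenvalues ∘ (Uhlmann.descPerm hA.eigenvalues) := rfl
    have h2 : specDesc B hB = hB.eigenvalues ∘ (Uhlmann.descPerm hB.eigenvalues) := rfl
    rw [h1, h2, Uhlmann.isMajorizedBy_comp]
  rw [key]
  constructor
  · intro h
    obtain ⟨w, hw0, hw1, hab⟩ := (Uhlmann.vec_uhlmann _ _).mp h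
    exact Uhlmann.matrix_comb_of_eigen_comb hA hB w hw0 hw1 hab
  · rintro ⟨m, q, U, hq0, hq1, hU, hAB⟩
    obtain ⟨w, hw0, hw1, hab⟩ := Uhlmann.eigen_comb_of_matrix_comb hA hB q U hq0 hq1 hU hAB
    exact (Uhlmann.vec_uhlmann _ _).mpr ⟨w, hw0, hw1, hab⟩
end
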